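/- Let G be a linearly ordered abelian group with finite spines and p a prime. Suppose there exist convex subgroups K_0 ⊊ K_1 ⊊ … ⊊ K_{n-1} ⊊ K_n = G with the index [K_{i+1} : K_i + pK_{i+1}] infinite for every i < n. Then there exist convex subgroups K'_0 ⊊ K'_1 ⊊ … ⊊ K'_{n-1} ⊊ K'_n = G with [K'_{i+1} : K'_i + pK'_{i+1}] infinite for every i < n and such that each K'_i (i < n) belongs to S_p, i.e., K'_i = H_p(a_i) for some a_i ∈ G. -/

import Mathlib

/-!
For each `i < n` pick `b ∈ K (i+1) \ (K i + pG)` whose spine element `H_p(b)` is minimal; finite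
spines make this possible. Then `K i ≤ H_p(b) < K (i+1)`, and minimality forces
`H_p(b) ⊆ K i + pG`: any `c ∈ H_p(b)` outside `K i + pG` would have `H_p(c) ⊊ H_p(b)`, since
`c ∉ H_p(c)`. Hence `H_p(b) + pK (i+1) = K i + pK (i+1)` still has infinite index in `K (i+1)`.
Infinite index of `H + pB` in a convex `B` persists when `B` is enlarged, because
`(H + pB') ∩ B = H + pB` by convexity of `B`.
-/

/-- `nH = {n • h : h ∈ H}` as a subgroup. -/
def smulSub {G : Type*} [AddCommGroup G] (n : ℕ) (H : AddSubgroup G) : AddSubgroup G :=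
  AddSubgroup.map (n • AddMonoidHom.id G) H

/-- A subgroup `H` of a linearly ordered abelian group is convex if
`0 ≤ g ≤ h` and `h ∈ H` imply `g ∈ H`. -/
def IsConvexSubgroup {G : Type*} [AddCommGroup G] [LinearOrder G] [IsOrderedAddMonoid G] (H : AddSubgroup G) : Prop :=
  ∀ g h : G, 0 ≤ g → g ≤ h → h ∈ H → g ∈ H

/-- `H_p(a)`: the largest convex subgroup `H` of `G` with `a ∉ H + pG` (equivalently the
union, i.e. supremum, of all such subgroups); it is the trivial subgroup when `a ∈ pG`. -/
def Hsub {G : Type*} [AddCommGroup G] [LinearOrder G] [IsOrderedAddMonoid G] (p : ℕ) (a : G) : AddSubgroup G :=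
  sSup {H : AddSubgroup G | IsConvexSubgroup H ∧ a ∉ H ⊔ smulSub p ⊤}

theorem lt_of_interleaved {α : Type*} [Preorder α] {n : ℕ} {K H : ℕ → α}
    (hK : ∀ i j : ℕ, i < j → j ≤ n → K i < K j) (hHK : ∀ i < n, H i < K (i + 1))
    (hKH : ∀ j ≤ n, K j ≤ H j) (i j : ℕ) (hij : i < j) (hj : j ≤ n) : H i < H j := by
  have hKj : K (i + 1) ≤ K j := by
    rcases (Nat.succ_le_of_lt hij).eq_or_lt with h | h
    · exact h ▸ le_rfl
    · exact (hK _ _ h hj).le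
  exact (hHK i (hij.trans_le hj)).trans_le (hKj.trans (hKH j hj))

section Convex

variable {G : Type*} [AddCommGroup G]

theorem mem_smulSub {n : ℕ} {H : AddSubgroup G} {x : G} :
    x ∈ smulSub n H ↔ ∃ h ∈ H, n • h = x := by
  simp [smulSub, AddSubgroup.mem_map]

theorem smulSub_le (n : ℕ) (H : AddSubgroup G) : smulSub n H ≤ H := by
  rintro _ ⟨h, hh, rfl⟩
  exact AddSubgroup.nsmul_mem H hh n

theorem smulSub_mono (n : ℕ) {H K : AddSubgroup G} (h : H ≤ K) : smulSub n H ≤ smulSub n K :=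
  AddSubgroup.map_mono h

variable [LinearOrder G] [IsOrderedAddMonoid G]

theorem isConvexSubgroup_bot : IsConvexSubgroup (⊥ : AddSubgroup G) := by
  intro g h hg hgh hh
  rw [AddSubgroup.mem_bot] at hh ⊢
  exact le_antisymm (hh ▸ hgh) hg

theorem isConvexSubgroup_top : IsConvexSubgroup (⊤ : AddSubgroup G) :=
  fun _ _ _ _ _ ↦ trivial

namespace IsConvexSubgroup

variable {H K : AddSubgroup G}

theorem mem_of_abs_le (hK : IsConvexSubgroup K) {x y : G} (hy : y ∈ K) (h : |x| ≤ |y|) :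
    x ∈ K := by
  have habs : ∀ {z : G}, z ∈ K ↔ |z| ∈ K := fun {z} ↦ by
    rcases abs_choice z with hz | hz <;> simp [hz]
  exact habs.2 (hK _ _ (abs_nonneg x) h (habs.1 hy))

theorem le_total (hH : IsConvexSubgroup H) (hK : IsConvexSubgroup K) : H ≤ K ∨ K ≤ H := by
  by_contra! hc
  obtain ⟨x, hxH, hxK⟩ := SetLike.not_le_iff_exists.mp hc.1
  obtain ⟨y, hyK, hyH⟩ := SetLike.not_le_iff_exists.mp hc.2
  rcases _root_.le_total |x| |y| with h | h
  · exact hxK (hK.mem_of_abs_le hyK h)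
  · exact hyH (hH.mem_of_abs_le hxH h)

theorem mem_of_nsmul_mem (hK : IsConvexSubgroup K) {n : ℕ} (hn : n ≠ 0) {g : G}
    (h : n • g ∈ K) : g ∈ K := by
  refine hK.mem_of_abs_le h ?_
  rw [abs_nsmul]
  simpa using nsmul_le_nsmul_left (abs_nonneg g) (Nat.one_le_iff_ne_zero.mpr hn)

theorem mem_sSup_iff {S : Set (AddSubgroup G)} (hS : ∀ H ∈ S, IsConvexSubgroup H)
    (hne : S.Nonempty) {x : G} : x ∈ sSup S ↔ ∃ H ∈ S, x ∈ H :=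
  AddSubgroup.mem_sSup_of_directedOn hne fun H hH K hK ↦
    (le_total (hS H hH) (hS K hK)).elim (fun h ↦ ⟨K, hK, h, le_rfl⟩) (fun h ↦ ⟨H, hH, le_rfl, h⟩)

end IsConvexSubgroup

theorem isConvexSubgroup_sSup {S : Set (AddSubgroup G)} (hS : ∀ H ∈ S, IsConvexSubgroup H) :
    IsConvexSubgroup (sSup S) := by
  rcases S.eq_empty_or_nonempty with rfl | hne
  · rw [sSup_empty]
    exact isConvexSubgroup_bot
  intro g h hg hgh hh
  obtain ⟨H, hHS, hhH⟩ := (IsConvexSubgroup.mem_sSup_iff hS hne).mp hh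
  exact (IsConvexSubgroup.mem_sSup_iff hS hne).mpr ⟨H, hHS, hS H hHS g h hg hgh hhH⟩

variable {p : ℕ} {A B B' : AddSubgroup G}

theorem mem_sup_smulSub_of_mem (hp : p ≠ 0) (hB : IsConvexSubgroup B) (hAB : A ≤ B)
    {C : AddSubgroup G} {x : G} (hxB : x ∈ B) (hx : x ∈ A ⊔ smulSub p C) :
    x ∈ A ⊔ smulSub p B := by
  obtain ⟨a, ha, _, ⟨c, -, rfl⟩, rfl⟩ := AddSubgroup.mem_sup.mp hx
  have hcB : c ∈ B := by
    refine hB.mem_of_nsmul_mem hp ?_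
    simpa using sub_mem hxB (hAB ha)
  exact AddSubgroup.add_mem_sup ha (mem_smulSub.mpr ⟨c, hcB, rfl⟩)

theorem sup_smulSub_inf_eq (hp : p ≠ 0) (hB : IsConvexSubgroup B) (hAB : A ≤ B)
    (hBB' : B ≤ B') : (A ⊔ smulSub p B') ⊓ B = A ⊔ smulSub p B :=
  le_antisymm (fun _ hx ↦ mem_sup_smulSub_of_mem hp hB hAB hx.2 hx.1)
    (le_inf (sup_le_sup_left (smulSub_mono p hBB') A) (sup_le hAB (smulSub_le p B)))

theorem relIndex_sup_smulSub_eq_zero_of_le (hp : p ≠ 0) (hB : IsConvexSubgroup B)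
    (hAB : A ≤ B) (hBB' : B ≤ B') (h : (A ⊔ smulSub p B).relIndex B = 0) :
    (A ⊔ smulSub p B').relIndex B' = 0 := by
  refine AddSubgroup.relIndex_eq_zero_of_le_right hBB' ?_
  rwa [← AddSubgroup.inf_relIndex_right, sup_smulSub_inf_eq hp hB hAB hBB']

end Convex

section Spine

variable {G : Type*} [AddCommGroup G] [LinearOrder G] [IsOrderedAddMonoid G] {p : ℕ} {a : G}
  {A B H : AddSubgroup G}

theorem isConvexSubgroup_Hsub (p : ℕ) (a : G) : IsConvexSubgroup (Hsub p a) :=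
  isConvexSubgroup_sSup fun _ hH ↦ hH.1

theorem le_Hsub (hA : IsConvexSubgroup A) (ha : a ∉ A ⊔ smulSub p ⊤) : A ≤ Hsub p a :=
  le_sSup ⟨hA, ha⟩

theorem notMem_Hsub (ha : a ∉ smulSub p ⊤) : a ∉ Hsub p a := by
  have hbot : a ∉ ⊥ ⊔ smulSub p ⊤ := by rwa [bot_sup_eq]
  intro h
  obtain ⟨H, ⟨-, haH⟩, ha⟩ := (IsConvexSubgroup.mem_sSup_iff (fun _ hH ↦ hH.1)
    (Set.nonempty_of_mem (s := {H | IsConvexSubgroup H ∧ a ∉ H ⊔ smulSub p ⊤})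
      ⟨isConvexSubgroup_bot, hbot⟩)).mp h
  exact haH (AddSubgroup.mem_sup_left ha)

theorem Hsub_le_of_mem (hH : IsConvexSubgroup H) (ha : a ∉ smulSub p ⊤) (haH : a ∈ H) :
    Hsub p a ≤ H :=
  (isConvexSubgroup_Hsub p a).le_total hH |>.resolve_right fun h ↦ notMem_Hsub ha (h haH)

theorem Hsub_lt_of_mem (hB : IsConvexSubgroup B) (ha : a ∉ smulSub p ⊤) (haB : a ∈ B) :
    Hsub p a < B :=
  (Hsub_le_of_mem hB ha haB).lt_of_ne fun h ↦ notMem_Hsub ha (h ▸ haB)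

theorem Hsub_le_sup_smulSub_of_minimalFor (hB : IsConvexSubgroup B)
    (hmin : MinimalFor (fun b ↦ b ∈ B ∧ b ∉ A ⊔ smulSub p ⊤) (Hsub p) a) :
    Hsub p a ≤ A ⊔ smulSub p ⊤ := by
  obtain ⟨⟨haB, haA⟩, hmin⟩ := hmin
  have hpG : ∀ {x : G}, x ∉ A ⊔ smulSub p ⊤ → x ∉ smulSub p ⊤ :=
    fun hx h ↦ hx (AddSubgroup.mem_sup_right h)
  intro c hc
  by_contra hcA
  have hcB : c ∈ B := (Hsub_lt_of_mem hB (hpG haA) haB).le hc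
  have hle : Hsub p c ≤ Hsub p a := Hsub_le_of_mem (isConvexSubgroup_Hsub p a) (hpG hcA) hc
  exact notMem_Hsub (hpG hcA) (hmin ⟨hcB, hcA⟩ hle hc)

theorem exists_Hsub_between (hp : p ≠ 0) (hfs : {H : AddSubgroup G | ∃ a, H = Hsub p a}.Finite)
    (hA : IsConvexSubgroup A) (hB : IsConvexSubgroup B) (hAB : A ≤ B)
    (hinf : (A ⊔ smulSub p B).relIndex B = 0) :
    ∃ a, A ≤ Hsub p a ∧ Hsub p a < B ∧ (Hsub p a ⊔ smulSub p B).relIndex B = 0 := by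
  obtain ⟨b, hbB, hb⟩ : ∃ b ∈ B, b ∉ A ⊔ smulSub p B :=
    SetLike.not_le_iff_exists.mp fun h ↦ by simp [AddSubgroup.relIndex_eq_one.mpr h] at hinf
  have hbA : b ∉ A ⊔ smulSub p ⊤ := fun h ↦ hb (mem_sup_smulSub_of_mem hp hB hAB hbB h)
  obtain ⟨a, hmin⟩ := Set.Finite.exists_minimalFor' (Hsub p) {b | b ∈ B ∧ b ∉ A ⊔ smulSub p ⊤}
    (hfs.subset (by rintro _ ⟨b, -, rfl⟩; exact ⟨b, rfl⟩)) ⟨b, hbB, hbA⟩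
  obtain ⟨haB, haA⟩ := hmin.1
  have hlt : Hsub p a < B := Hsub_lt_of_mem hB (fun h ↦ haA (AddSubgroup.mem_sup_right h)) haB
  have heq : Hsub p a ⊔ smulSub p B = A ⊔ smulSub p B := by
    refine le_antisymm (sup_le (fun c hc ↦ ?_) le_sup_right) (sup_le_sup_right (le_Hsub hA haA) _)
    exact mem_sup_smulSub_of_mem hp hB hAB (hlt.le hc)
      (Hsub_le_sup_smulSub_of_minimalFor hB hmin hc)
  exact ⟨a, le_Hsub hA haA, hlt, heq ▸ hinf⟩

end Spine

theorem kp_witnessed_in_spine_general {G : Type*} [AddCommGroup G] [LinearOrder G] [IsOrderedAddMonoid G]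
    (hfs : ∀ q : ℕ, q.Prime → {H : AddSubgroup G | ∃ a : G, H = Hsub q a}.Finite)
    (p : ℕ) (hp : p.Prime) (n : ℕ) (K : ℕ → AddSubgroup G)
    (hconv : ∀ i ≤ n, IsConvexSubgroup (K i))
    (hchain : ∀ i j : ℕ, i < j → j ≤ n → K i < K j)
    (hinf : ∀ i < n, (K i ⊔ smulSub p (K (i + 1))).relIndex (K (i + 1)) = 0) :
    ∃ K' : ℕ → AddSubgroup G,
      (∀ i ≤ n, IsConvexSubgroup (K' i)) ∧
      (∀ i j : ℕ, i < j → j ≤ n → K' i < K' j) ∧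
      K' n = ⊤ ∧
      (∀ i < n, (K' i ⊔ smulSub p (K' (i + 1))).relIndex (K' (i + 1)) = 0) ∧
      (∀ i < n, ∃ a : G, K' i = Hsub p a) := by
  have hstep : ∀ i < n, ∃ a, K i ≤ Hsub p a ∧ Hsub p a < K (i + 1) ∧
      (Hsub p a ⊔ smulSub p (K (i + 1))).relIndex (K (i + 1)) = 0 := fun i hi ↦
    exists_Hsub_between hp.ne_zero (hfs p hp) (hconv i hi.le) (hconv (i + 1) hi)
      (hchain i (i + 1) i.lt_succ_self hi).le (hinf i hi)
  choose! a hKa haK ha0 using hstep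
  set K' : ℕ → AddSubgroup G := fun i ↦ if i < n then Hsub p (a i) else ⊤
  have hK'_of_lt : ∀ i < n, K' i = Hsub p (a i) := fun i hi ↦ if_pos hi
  have hKK' : ∀ j ≤ n, K j ≤ K' j := by
    intro j hj
    by_cases h : j < n
    · exact (hK'_of_lt j h).symm ▸ hKa j h
    · simp [K', h]
  refine ⟨K', fun i _ ↦ ?_, lt_of_interleaved hchain (fun i hi ↦ ?_) hKK', by simp [K'],
    fun i hi ↦ ?_, fun i hi ↦ ⟨a i, hK'_of_lt i hi⟩⟩
  · by_cases h : i < n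
    · exact (hK'_of_lt i h).symm ▸ isConvexSubgroup_Hsub p (a i)
    · simpa [K', h] using isConvexSubgroup_top
  · exact (hK'_of_lt i hi).symm ▸ haK i hi
  · rw [hK'_of_lt i hi]
    exact relIndex_sup_smulSub_eq_zero_of_le hp.ne_zero (hconv (i + 1) hi) (haK i hi).le
      (hKK' (i + 1) hi) (ha0 i hi)

/-- Let `G` be a linearly ordered abelian group with finite spines and `p` a prime.
If there are convex subgroups `K 0 ⊊ … ⊊ K (n-1) ⊊ K n = G` with
`[K (i+1) : K i + p K (i+1)]` infinite for every `i < n`, then there are convex subgroups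
`K' 0 ⊊ … ⊊ K' (n-1) ⊊ K' n = G` with the same property such that each `K' i` (`i < n`)
lies in the spine `S_p`, i.e. `K' i = H_p(a i)` for some `a i ∈ G`.
(Infinite index is expressed by `AddSubgroup.relindex … = 0`.) -/
theorem kp_witnessed_in_spine {G : Type*} [AddCommGroup G] [LinearOrder G] [IsOrderedAddMonoid G]
    (hfs : ∀ q : ℕ, q.Prime → {H : AddSubgroup G | ∃ a : G, H = Hsub q a}.Finite)
    (p : ℕ) (hp : p.Prime) (n : ℕ) (K : ℕ → AddSubgroup G)
    (hconv : ∀ i ≤ n, IsConvexSubgroup (K i))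
    (hchain : ∀ i j : ℕ, i < j → j ≤ n → K i < K j)
    (hKn : K n = ⊤)
    (hinf : ∀ i < n, (K i ⊔ smulSub p (K (i + 1))).relIndex (K (i + 1)) = 0) :
    ∃ K' : ℕ → AddSubgroup G,
      (∀ i ≤ n, IsConvexSubgroup (K' i)) ∧
      (∀ i j : ℕ, i < j → j ≤ n → K' i < K' j) ∧
      K' n = ⊤ ∧
      (∀ i < n, (K' i ⊔ smulSub p (K' (i + 1))).relIndex (K' (i + 1)) = 0) ∧
      (∀ i < n, ∃ a : G, K' i = Hsub p a) :=
  kp_witnessed_in_spine_general hfs p hp n K hconv hchain hinf
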